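/- Let d ≥ 1, α ∈ (0,1] and β ∈ (0, α). There is a constant C depending only on d, α and β such that for every bounded continuous f : ℝ^d → ℝ with finite Hölder seminorm [f]_{C^α} and every T ∈ (0,1], ‖f − P_T f‖_{C^β} ≤ C T^{(α−β)/2} ‖f‖_{C^α}, where ‖h‖_{C^γ} := sup_x |h(x)| + [h]_{C^γ}. -/

import Mathlib

/-
Write `f x - P_T f x = ∫ k_T z * (f x - f (x - z)) dz` with the Gaussian kernel `k_T` of mass one.
The `C^α` bound on `f` turns this into `|f - P_T f| ≤ [f]_α M_α T^{α/2}`, where `M_α T^{α/2}` is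
the `α`-th moment of `k_T` by parabolic scaling; and `P_T`, an average of translates, does not
increase `[·]_α`, so `[f - P_T f]_α ≤ 2 [f]_α`. Interpolating between these two bounds at the
length scale `√T` gives `[f - P_T f]_β ≲ [f]_α T^{(α-β)/2}`.
-/

open scoped ENNReal

/-- The sup norm `sup_x |f x|`, valued in `ℝ≥0∞`. -/
noncomputable def supN {X : Type*} (f : X → ℝ) : ℝ≥0∞ :=
  ⨆ x, ENNReal.ofReal |f x|

/-- The Hölder seminorm `[f]_{C^γ} = sup_{x ≠ y} |f x - f y| / |x - y|^γ`, valued in `ℝ≥0∞`. -/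
noncomputable def hSemi {X : Type*} [MetricSpace X] (γ : ℝ) (f : X → ℝ) : ℝ≥0∞ :=
  ⨆ (x : X) (y : X) (_ : x ≠ y), ENNReal.ofReal (|f x - f y| / dist x y ^ γ)

/-- The Hölder norm `‖f‖_{C^γ} = sup_x |f x| + [f]_{C^γ}`. -/
noncomputable def hNorm {X : Type*} [MetricSpace X] (γ : ℝ) (f : X → ℝ) : ℝ≥0∞ :=
  supN f + hSemi γ f

/-- The heat semigroup on `ℝ^d`:
`(P_t f)(x) = ∫ (4πt)^{-d/2} exp(-|x-y|²/(4t)) f(y) dy`. -/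
noncomputable def heat (d : ℕ) (t : ℝ) (f : EuclideanSpace ℝ (Fin d) → ℝ)
    (x : EuclideanSpace ℝ (Fin d)) : ℝ :=
  ∫ y, (4 * Real.pi * t) ^ (-(d : ℝ) / 2) * Real.exp (-‖x - y‖ ^ 2 / (4 * t)) * f y

open MeasureTheory Real

local notation "E" d => EuclideanSpace ℝ (Fin d)

section HolderBounds
variable {X : Type*} {g : X → ℝ} {A K γ : ℝ}

lemma abs_le_toReal_supN (h : supN g < ⊤) (x : X) : |g x| ≤ (supN g).toReal :=
  (ENNReal.ofReal_le_iff_le_toReal h.ne).1 (le_iSup (fun x => ENNReal.ofReal |g x|) x)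

lemma supN_le_ofReal (h : ∀ x, |g x| ≤ A) : supN g ≤ ENNReal.ofReal A :=
  iSup_le fun x => ENNReal.ofReal_le_ofReal (h x)

variable [MetricSpace X]

lemma abs_sub_le_toReal_hSemi_mul (h : hSemi γ g < ⊤) (x y : X) :
    |g x - g y| ≤ (hSemi γ g).toReal * dist x y ^ γ := by
  rcases eq_or_ne x y with rfl | hxy
  · simp only [sub_self, abs_zero]; positivity
  · rw [← div_le_iff₀ (rpow_pos_of_pos (dist_pos.2 hxy) γ)]
    exact (ENNReal.ofReal_le_iff_le_toReal h.ne).1 (le_iSup₂_of_le x y (le_iSup_of_le hxy le_rfl))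

lemma hSemi_le_ofReal (h : ∀ x y, |g x - g y| ≤ K * dist x y ^ γ) :
    hSemi γ g ≤ ENNReal.ofReal K :=
  iSup₂_le fun x y => iSup_le fun hxy => ENNReal.ofReal_le_ofReal <|
    (div_le_iff₀ (rpow_pos_of_pos (dist_pos.2 hxy) γ)).2 (h x y)

/-- Interpolation at the length scale `ρ`: below it use the `C^α` bound, above it the sup bound. -/
lemma abs_sub_le_of_abs_le_of_holder {α β ρ : ℝ} (hβ0 : 0 ≤ β) (hβα : β ≤ α) (hρ : 0 < ρ)
    (hA0 : 0 ≤ A) (hK0 : 0 ≤ K) (hA : ∀ x, |g x| ≤ A * ρ ^ α)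
    (hg : ∀ x y, |g x - g y| ≤ K * dist x y ^ α) (x y : X) :
    |g x - g y| ≤ (2 * A + K) * ρ ^ (α - β) * dist x y ^ β := by
  rcases eq_or_ne x y with rfl | hxy
  · simp only [sub_self, abs_zero]; positivity
  have hsplit : ∀ r : ℝ, 0 < r → r ^ α = r ^ (α - β) * r ^ β := fun r hr => by
    rw [← rpow_add hr, sub_add_cancel]
  have hαβ : 0 ≤ α - β := sub_nonneg.2 hβα
  rcases le_or_gt (dist x y) ρ with hnear | hfar
  · calc |g x - g y| ≤ K * dist x y ^ α := hg x y
      _ = K * dist x y ^ (α - β) * dist x y ^ β := by rw [hsplit _ (dist_pos.2 hxy), mul_assoc]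
      _ ≤ (2 * A + K) * ρ ^ (α - β) * dist x y ^ β := by gcongr; linarith
  · calc |g x - g y| ≤ |g x| + |g y| := abs_sub _ _
      _ ≤ 2 * A * ρ ^ α := by linarith [hA x, hA y]
      _ = 2 * A * ρ ^ (α - β) * ρ ^ β := by rw [hsplit ρ hρ]; ring
      _ ≤ (2 * A + K) * ρ ^ (α - β) * dist x y ^ β := by gcongr; linarith

end HolderBounds

noncomputable def heatKernel (d : ℕ) (t : ℝ) (z : E d) : ℝ :=
  (4 * π * t) ^ (-(d : ℝ) / 2) * rexp (-‖z‖ ^ 2 / (4 * t))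

noncomputable def heatMoment (d : ℕ) (γ : ℝ) : ℝ :=
  ∫ w : E d, heatKernel d 1 w * ‖w‖ ^ γ

section HeatKernel

variable {d : ℕ} {t : ℝ}

lemma heat_eq_integral_heatKernel_mul (f : (E d) → ℝ) (x : E d) :
    heat d t f x = ∫ z, heatKernel d t z * f (x - z) :=
  calc heat d t f x = ∫ y, heatKernel d t (x - y) * f y := rfl
    _ = ∫ z, heatKernel d t (x - (x - z)) * f (x - z) :=
      (integral_sub_left_eq_self (fun y => heatKernel d t (x - y) * f y) volume x).symm
    _ = ∫ z, heatKernel d t z * f (x - z) := by simp only [sub_sub_cancel]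

lemma heatKernel_nonneg (ht : 0 ≤ t) (z : E d) : 0 ≤ heatKernel d t z := by
  unfold heatKernel; positivity

lemma heatKernel_eq_mul_exp (t : ℝ) (z : E d) :
    heatKernel d t z = (4 * π * t) ^ (-(d : ℝ) / 2) * rexp (-(4 * t)⁻¹ * ‖z‖ ^ 2) := by
  rw [heatKernel]; congr 2; ring

lemma integrable_exp_neg_mul_sq_norm_mul_rpow {b γ : ℝ} (hb : 0 < b) (hγ : 0 ≤ γ) :
    Integrable fun z : E d => rexp (-b * ‖z‖ ^ 2) * ‖z‖ ^ γ := by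
  rcases d with _ | n
  · exact Integrable.of_finite
  · rw [integrable_fun_norm_addHaar volume (f := fun r => rexp (-b * r ^ 2) * r ^ γ)]
    refine (integrableOn_rpow_mul_exp_neg_mul_sq hb (s := n + γ) (by linarith)).congr_fun
      (fun r (hr : 0 < r) => ?_) measurableSet_Ioi
    simp only [finrank_euclideanSpace_fin, add_tsub_cancel_right, smul_eq_mul]
    rw [rpow_add hr, rpow_natCast]; ring

lemma integrable_heatKernel_mul_norm_rpow (ht : 0 < t) {γ : ℝ} (hγ : 0 ≤ γ) :
    Integrable fun z : E d => heatKernel d t z * ‖z‖ ^ γ := by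
  simpa only [heatKernel_eq_mul_exp, mul_assoc] using
    (integrable_exp_neg_mul_sq_norm_mul_rpow (by positivity) hγ).const_mul _

lemma integrable_heatKernel (ht : 0 < t) : Integrable (heatKernel d t) := by
  simpa using integrable_heatKernel_mul_norm_rpow ht le_rfl

lemma integral_heatKernel (ht : 0 < t) : ∫ z, heatKernel d t z = 1 := by
  simp_rw [heatKernel_eq_mul_exp]
  rw [integral_const_mul, GaussianFourier.integral_rexp_neg_mul_sq_norm (by positivity),
    finrank_euclideanSpace_fin, div_inv_eq_mul, show π * (4 * t) = 4 * π * t by ring,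
    ← rpow_add (by positivity), neg_div, neg_add_cancel, rpow_zero]

lemma heatKernel_mul_norm_rpow_eq (ht : 0 < t) (γ : ℝ) (z : E d) :
    heatKernel d t z * ‖z‖ ^ γ
      = t ^ (γ / 2) * t ^ (-(d : ℝ) / 2) * (heatKernel d 1 ((√t)⁻¹ • z) * ‖(√t)⁻¹ • z‖ ^ γ) := by
  have hs : 0 < √t := sqrt_pos.2 ht
  have hnorm : ‖(√t)⁻¹ • z‖ = (√t)⁻¹ * ‖z‖ := by
    rw [norm_smul, norm_inv, Real.norm_of_nonneg hs.le]
  have hsq : ‖(√t)⁻¹ • z‖ ^ 2 = ‖z‖ ^ 2 / t := by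
    rw [hnorm, mul_pow, inv_pow, sq_sqrt ht.le, inv_mul_eq_div]
  have hpow : ‖(√t)⁻¹ • z‖ ^ γ = (t ^ (γ / 2))⁻¹ * ‖z‖ ^ γ := by
    rw [hnorm, mul_rpow (by positivity) (norm_nonneg z), inv_rpow hs.le, sqrt_eq_rpow,
      ← rpow_mul ht.le, one_div_mul_eq_div]
  have hconst :
      (4 * π * t) ^ (-(d : ℝ) / 2) = (4 * π * 1) ^ (-(d : ℝ) / 2) * t ^ (-(d : ℝ) / 2) := by
    rw [mul_one, mul_rpow (by positivity) ht.le]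
  have hexp : -‖(√t)⁻¹ • z‖ ^ 2 / (4 * 1) = -‖z‖ ^ 2 / (4 * t) := by
    rw [hsq]; field_simp
  have htγ : 0 < t ^ (γ / 2) := rpow_pos_of_pos ht _
  rw [heatKernel, heatKernel, hpow, hconst, hexp]
  field_simp

lemma integral_heatKernel_mul_norm_rpow (ht : 0 < t) (γ : ℝ) :
    ∫ z : E d, heatKernel d t z * ‖z‖ ^ γ = t ^ (γ / 2) * heatMoment d γ := by
  have hs : 0 ≤ √t := sqrt_nonneg t
  have hscale : √t ^ Module.finrank ℝ (E d) = t ^ ((d : ℝ) / 2) := by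
    rw [finrank_euclideanSpace_fin, sqrt_eq_rpow, ← rpow_natCast, ← rpow_mul ht.le,
      one_div_mul_eq_div]
  simp_rw [heatKernel_mul_norm_rpow_eq ht γ]
  rw [integral_const_mul, Measure.integral_comp_inv_smul_of_nonneg volume
    (fun w : E d => heatKernel d 1 w * ‖w‖ ^ γ) hs, hscale, smul_eq_mul, ← heatMoment]
  have hcancel : t ^ (-(d : ℝ) / 2) * t ^ ((d : ℝ) / 2) = 1 := by
    rw [← rpow_add ht, neg_div, neg_add_cancel, rpow_zero]
  linear_combination t ^ (γ / 2) * heatMoment d γ * hcancel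

lemma heatMoment_nonneg {γ : ℝ} : 0 ≤ heatMoment d γ :=
  integral_nonneg fun w => mul_nonneg (heatKernel_nonneg zero_le_one w) (by positivity)

end HeatKernel

section HeatOfHolder
variable {d : ℕ} {t B L α : ℝ} {f : (E d) → ℝ}

lemma integrable_heatKernel_mul_comp_sub (ht : 0 < t) (hf : AEStronglyMeasurable f)
    (hB : ∀ x, |f x| ≤ B) (x : E d) : Integrable fun z => heatKernel d t z * f (x - z) :=
  (integrable_heatKernel ht).mul_bdd
    (hf.comp_measurePreserving (Measure.measurePreserving_sub_left volume x))
    (.of_forall fun z => hB (x - z))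

lemma abs_sub_heat_le (ht : 0 < t) (hα : 0 ≤ α) (hf : AEStronglyMeasurable f)
    (hB : ∀ x, |f x| ≤ B) (hL : ∀ u v, |f u - f v| ≤ L * dist u v ^ α) (x : E d) :
    |f x - heat d t f x| ≤ L * heatMoment d α * t ^ (α / 2) := by
  have hrepr : f x - heat d t f x = ∫ z, heatKernel d t z * (f x - f (x - z)) := by
    simp_rw [mul_sub]
    rw [integral_sub ((integrable_heatKernel ht).mul_const _)
      (integrable_heatKernel_mul_comp_sub ht hf hB x), integral_mul_const, integral_heatKernel ht,
      one_mul, heat_eq_integral_heatKernel_mul]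
  rw [hrepr, ← Real.norm_eq_abs]
  calc ‖∫ z, heatKernel d t z * (f x - f (x - z))‖
      ≤ ∫ z, L * (heatKernel d t z * ‖z‖ ^ α) :=
        norm_integral_le_of_norm_le ((integrable_heatKernel_mul_norm_rpow ht hα).const_mul L)
          (.of_forall fun z => ?_)
    _ = L * heatMoment d α * t ^ (α / 2) := by
        rw [integral_const_mul, integral_heatKernel_mul_norm_rpow ht]; ring
  rw [norm_mul, Real.norm_of_nonneg (heatKernel_nonneg ht.le z), Real.norm_eq_abs, mul_left_comm]
  simpa using mul_le_mul_of_nonneg_left (hL x (x - z)) (heatKernel_nonneg ht.le z)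

lemma abs_heat_sub_heat_le (ht : 0 < t) (hf : AEStronglyMeasurable f)
    (hB : ∀ x, |f x| ≤ B) (hL : ∀ u v, |f u - f v| ≤ L * dist u v ^ α) (x y : E d) :
    |heat d t f x - heat d t f y| ≤ L * dist x y ^ α := by
  rw [heat_eq_integral_heatKernel_mul, heat_eq_integral_heatKernel_mul,
    ← integral_sub (integrable_heatKernel_mul_comp_sub ht hf hB x)
      (integrable_heatKernel_mul_comp_sub ht hf hB y), ← Real.norm_eq_abs]
  calc ‖∫ z, (heatKernel d t z * f (x - z) - heatKernel d t z * f (y - z))‖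
      ≤ ∫ z, heatKernel d t z * (L * dist x y ^ α) :=
        norm_integral_le_of_norm_le ((integrable_heatKernel ht).mul_const _)
          (.of_forall fun z => ?_)
    _ = L * dist x y ^ α := by rw [integral_mul_const, integral_heatKernel ht, one_mul]
  rw [← mul_sub, norm_mul, Real.norm_of_nonneg (heatKernel_nonneg ht.le z), Real.norm_eq_abs]
  simpa only [dist_sub_right] using
    mul_le_mul_of_nonneg_left (hL (x - z) (y - z)) (heatKernel_nonneg ht.le z)

lemma hNorm_sub_heat_le {β : ℝ} (ht0 : 0 < t) (ht1 : t ≤ 1)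
    (hβ0 : 0 ≤ β) (hβα : β ≤ α) (hL0 : 0 ≤ L) (hf : AEStronglyMeasurable f)
    (hB : ∀ x, |f x| ≤ B) (hL : ∀ u v, |f u - f v| ≤ L * dist u v ^ α) :
    hNorm β (fun x => f x - heat d t f x)
      ≤ ENNReal.ofReal (L * (3 * heatMoment d α + 2) * t ^ ((α - β) / 2)) := by
  have hM : 0 ≤ heatMoment d α := heatMoment_nonneg
  have hsqrt : ∀ γ : ℝ, √t ^ γ = t ^ (γ / 2) := fun γ => by
    rw [sqrt_eq_rpow, ← rpow_mul ht0.le, one_div_mul_eq_div]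
  have hsup : ∀ x, |f x - heat d t f x| ≤ L * heatMoment d α * √t ^ α := by
    simpa only [hsqrt] using abs_sub_heat_le ht0 (hβ0.trans hβα) hf hB hL
  have hhol : ∀ x y, |(f x - heat d t f x) - (f y - heat d t f y)| ≤ 2 * L * dist x y ^ α :=
    fun x y => calc
      _ = |(f x - f y) - (heat d t f x - heat d t f y)| := by ring_nf
      _ ≤ |f x - f y| + |heat d t f x - heat d t f y| := abs_sub _ _
      _ ≤ 2 * L * dist x y ^ α := by linarith [hL x y, abs_heat_sub_heat_le ht0 hf hB hL x y]
  have hsemi := abs_sub_le_of_abs_le_of_holder hβ0 hβα (sqrt_pos.2 ht0) (by positivity)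
    (by positivity) hsup hhol
  have hmono : L * heatMoment d α * t ^ (α / 2) ≤ L * heatMoment d α * t ^ ((α - β) / 2) := by
    have := rpow_le_rpow_of_exponent_ge ht0 ht1 (show (α - β) / 2 ≤ α / 2 by linarith)
    gcongr
  calc hNorm β (fun x => f x - heat d t f x)
      ≤ ENNReal.ofReal (L * heatMoment d α * t ^ (α / 2))
          + ENNReal.ofReal ((2 * (L * heatMoment d α) + 2 * L) * t ^ ((α - β) / 2)) :=
        add_le_add (supN_le_ofReal (by simpa only [hsqrt] using hsup))
          (hSemi_le_ofReal (by simpa only [hsqrt] using hsemi))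
    _ = ENNReal.ofReal (L * heatMoment d α * t ^ (α / 2)
          + (2 * (L * heatMoment d α) + 2 * L) * t ^ ((α - β) / 2)) :=
        (ENNReal.ofReal_add (by positivity) (by positivity)).symm
    _ ≤ ENNReal.ofReal (L * (3 * heatMoment d α + 2) * t ^ ((α - β) / 2)) :=
        ENNReal.ofReal_le_ofReal (by linarith)

end HeatOfHolder

theorem stmt_9_general (d : ℕ) (α β : ℝ)
    (hβ0 : 0 < β) (hβα : β < α) :
    ∃ C : ℝ, 0 < C ∧
      ∀ f : EuclideanSpace ℝ (Fin d) → ℝ, Continuous f → supN f < ⊤ → hSemi α f < ⊤ →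
        ∀ T : ℝ, 0 < T → T ≤ 1 →
          hNorm β (fun x => f x - heat d T f x) ≤
            ENNReal.ofReal (C * T ^ ((α - β) / 2)) * hNorm α f := by
  have hM : 0 ≤ heatMoment d α := heatMoment_nonneg
  refine ⟨3 * heatMoment d α + 2, by linarith, fun f hf hsup hsemi T hT0 hT1 => ?_⟩
  have hL : ENNReal.ofReal (hSemi α f).toReal ≤ hNorm α f := by
    rw [ENNReal.ofReal_toReal hsemi.ne]
    exact le_add_self
  calc hNorm β (fun x => f x - heat d T f x)
      ≤ ENNReal.ofReal ((hSemi α f).toReal * (3 * heatMoment d α + 2) * T ^ ((α - β) / 2)) :=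
        hNorm_sub_heat_le hT0 hT1 hβ0.le hβα.le ENNReal.toReal_nonneg hf.aestronglyMeasurable
          (abs_le_toReal_supN hsup) (abs_sub_le_toReal_hSemi_mul hsemi)
    _ = ENNReal.ofReal ((3 * heatMoment d α + 2) * T ^ ((α - β) / 2))
          * ENNReal.ofReal (hSemi α f).toReal := by
        rw [← ENNReal.ofReal_mul (by positivity)]
        ring_nf
    _ ≤ ENNReal.ofReal ((3 * heatMoment d α + 2) * T ^ ((α - β) / 2)) * hNorm α f := by
        gcongr

theorem stmt_9 (d : ℕ) (hd : 1 ≤ d) (α β : ℝ) (hα0 : 0 < α) (hα1 : α ≤ 1)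
    (hβ0 : 0 < β) (hβα : β < α) :
    ∃ C : ℝ, 0 < C ∧
      ∀ f : EuclideanSpace ℝ (Fin d) → ℝ, Continuous f → supN f < ⊤ → hSemi α f < ⊤ →
        ∀ T : ℝ, 0 < T → T ≤ 1 →
          hNorm β (fun x => f x - heat d T f x) ≤
            ENNReal.ofReal (C * T ^ ((α - β) / 2)) * hNorm α f :=
  stmt_9_general d α β hβ0 hβα
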